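/- Assume the antilinear system Σₐ is stabilizable, Q ∈ ℂ^{n×n} and R ∈ ℂ^{m×m} are Hermitian positive definite, and let P be the unique Hermitian positive definite solution of the anti-Riccati equation −Q = A₂^H P^# A₂ − A₂^H P^# B₂ (R + B₂^H P^# B₂)^{-1} B₂^H P^# A₂ − P. Then the iteration P(0) = Q, P(k+1) = Q + A₂^H (P(k)^{-#} + B₂ R^{-1} B₂^H)^{-1} A₂ is well defined (each P(k) is Hermitian positive definite) and P(k) → P entrywise as k → ∞. -/

import Mathlib

open Matrix Filter Topology
open scoped ENNReal ComplexOrder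

noncomputable section

/-- Entrywise complex conjugate of a matrix, `M^#`. -/
def mconj {k l : Type*} (A : Matrix k l ℂ) : Matrix k l ℂ := A.map (starRingEnd ℂ)

variable {n m : ℕ}

/-- The antilinear system `x(k+1) = A₂^# x^#(k) + B₂^# u^#(k)` is stabilizable if some
feedback `u(k) = K₁x(k) + K₂^#x^#(k)` drives every closed-loop solution to zero. -/
def AntiStabilizable (A₂ : Matrix (Fin n) (Fin n) ℂ) (B₂ : Matrix (Fin n) (Fin m) ℂ) :
    Prop :=
  ∃ K₁ K₂ : Matrix (Fin m) (Fin n) ℂ, ∀ x : ℕ → (Fin n → ℂ),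
    (∀ k : ℕ, x (k + 1) =
        mconj A₂ *ᵥ star (x k) + mconj B₂ *ᵥ star (K₁ *ᵥ x k + mconj K₂ *ᵥ star (x k))) →
    Tendsto x atTop (𝓝 0)

/-- The trajectory of the antilinear system `x(k+1) = A₂^# x^#(k) + B₂^# u^#(k)` from
the initial condition `x₀` under the control sequence `u`. -/
def atraj (A₂ : Matrix (Fin n) (Fin n) ℂ) (B₂ : Matrix (Fin n) (Fin m) ℂ)
    (x₀ : Fin n → ℂ) (u : ℕ → Fin m → ℂ) : ℕ → Fin n → ℂ
  | 0 => x₀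
  | k + 1 => mconj A₂ *ᵥ star (atraj A₂ B₂ x₀ u k) + mconj B₂ *ᵥ star (u k)

/-- The quadratic cost `J = Σ_k (x(k)^H Q x(k) + u(k)^H R u(k))`, valued in `[0,∞]`. -/
def cost (Q : Matrix (Fin n) (Fin n) ℂ) (R : Matrix (Fin m) (Fin m) ℂ)
    (x : ℕ → Fin n → ℂ) (u : ℕ → Fin m → ℂ) : ℝ≥0∞ :=
  ∑' k : ℕ, ENNReal.ofReal ((star (x k) ⬝ᵥ (Q *ᵥ x k)).re + (star (u k) ⬝ᵥ (R *ᵥ u k)).re)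

/-- The LQR problem for the antilinear system is solvable: for every initial condition
there is a control of finite cost minimizing the cost. -/
def LQRSolvable (A₂ : Matrix (Fin n) (Fin n) ℂ) (B₂ : Matrix (Fin n) (Fin m) ℂ)
    (Q : Matrix (Fin n) (Fin n) ℂ) (R : Matrix (Fin m) (Fin m) ℂ) : Prop :=
  ∀ x₀ : Fin n → ℂ, ∃ u : ℕ → Fin m → ℂ,
    cost Q R (atraj A₂ B₂ x₀ u) u < ⊤ ∧
    ∀ u' : ℕ → Fin m → ℂ, cost Q R (atraj A₂ B₂ x₀ u) u ≤ cost Q R (atraj A₂ B₂ x₀ u') u'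

/-- The anti-Riccati equation
`-Q = A₂^H P^# A₂ - A₂^H P^# B₂ (R + B₂^H P^# B₂)⁻¹ B₂^H P^# A₂ - P`. -/
def AntiRiccati (A₂ : Matrix (Fin n) (Fin n) ℂ) (B₂ : Matrix (Fin n) (Fin m) ℂ)
    (Q : Matrix (Fin n) (Fin n) ℂ) (R : Matrix (Fin m) (Fin m) ℂ)
    (P : Matrix (Fin n) (Fin n) ℂ) : Prop :=
  -Q = A₂ᴴ * mconj P * A₂ -
      A₂ᴴ * mconj P * B₂ * (R + B₂ᴴ * mconj P * B₂)⁻¹ * (B₂ᴴ * mconj P * A₂) - P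

/-- The anti-Riccati iteration `P(0) = Q`,
`P(k+1) = Q + A₂^H (P(k)^{-#} + B₂ R⁻¹ B₂^H)⁻¹ A₂`. -/
def antiIter (A₂ : Matrix (Fin n) (Fin n) ℂ) (B₂ : Matrix (Fin n) (Fin m) ℂ)
    (Q : Matrix (Fin n) (Fin n) ℂ) (R : Matrix (Fin m) (Fin m) ℂ) :
    ℕ → Matrix (Fin n) (Fin n) ℂ
  | 0 => Q
  | k + 1 => Q + A₂ᴴ * ((mconj (antiIter A₂ B₂ Q R k))⁻¹ + B₂ * R⁻¹ * B₂ᴴ)⁻¹ * A₂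

/-! The map `F X = Q + A₂ᴴ ((X^#)⁻¹ + B₂ R⁻¹ B₂ᴴ)⁻¹ A₂` is monotone on positive definite matrices
for the Loewner order, since `X ↦ X^#` and conjugation are monotone and inversion is antitone;
by the Woodbury identity its positive definite fixed points are exactly the positive definite
solutions of the anti-Riccati equation. So `P(k) = Fᵏ Q` increases from `Q` and stays below the
solution `P`. A Loewner-monotone bounded sequence converges, because its quadratic forms do and
polarization recovers the entries from them. The limit dominates `Q`, so it is positive definite,
and it is a fixed point of the continuous map `F`; uniqueness identifies it with `P`. -/

open Function
open scoped MatrixOrder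

theorem Complex.exists_tendsto_of_monotone_of_bddAbove {α : Type*} [Preorder α] {f : α → ℂ}
    (hf : Monotone f) (hb : BddAbove (Set.range f)) : ∃ c, Tendsto f atTop (𝓝 c) := by
  obtain ⟨b, hb⟩ := hb
  have hle (a : α) : f a ≤ b := hb ⟨a, rfl⟩
  -- `z ≤ w` in `ℂ` means `z.re ≤ w.re` and `z.im = w.im`
  have hre : Tendsto (fun a => (f a).re) atTop (𝓝 (⨆ a, (f a).re)) :=
    tendsto_atTop_ciSup (fun a a' h => (le_def.1 (hf h)).1)
      ⟨b.re, by rintro _ ⟨a, rfl⟩; exact (le_def.1 (hle a)).1⟩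
  have him : Tendsto (fun a => (f a).im) atTop (𝓝 (⨆ a, (f a).im)) :=
    tendsto_atTop_ciSup (fun a a' h => (le_def.1 (hf h)).2.le)
      ⟨b.im, by rintro _ ⟨a, rfl⟩; exact (le_def.1 (hle a)).2.le⟩
  exact ⟨_, (hre.ofReal.add (him.ofReal.mul_const I)).congr fun a => re_add_im (f a)⟩

namespace Matrix

section Conj

variable {ι : Type*}

theorem IsHermitian.mconj_eq_transpose {A : Matrix ι ι ℂ} (h : A.IsHermitian) :
    mconj A = Aᵀ := by
  ext i j
  simpa [mconj] using congrFun (congrFun h j) i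

theorem continuous_mconj : Continuous (mconj : Matrix ι ι ℂ → Matrix ι ι ℂ) :=
  continuous_id.matrix_map Complex.continuous_conj

theorem PosDef.of_le {A B : Matrix ι ι ℂ} (hA : A.PosDef) (h : A ≤ B) : B.PosDef := by
  simpa using hA.add_posSemidef (le_iff.1 h)

theorem PosDef.mconj {A : Matrix ι ι ℂ} (h : A.PosDef) : (mconj A).PosDef := by
  rw [h.isHermitian.mconj_eq_transpose]
  exact h.transpose

theorem PosSemidef.mconj {A : Matrix ι ι ℂ} (h : A.PosSemidef) : (mconj A).PosSemidef := by
  rw [h.isHermitian.mconj_eq_transpose]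
  exact h.transpose

theorem mconj_mono {A B : Matrix ι ι ℂ} (h : A ≤ B) : mconj A ≤ mconj B := by
  rw [le_iff, show mconj B - mconj A = mconj (B - A) by ext; simp [mconj]]
  exact (le_iff.1 h).mconj

end Conj

section Loewner

variable {ι : Type*} [Fintype ι]

theorem dotProduct_mulVec_polarization (A : Matrix ι ι ℂ) (x y : ι → ℂ) :
    star x ⬝ᵥ (A *ᵥ y) =
      (star (x + y) ⬝ᵥ (A *ᵥ (x + y)) - star (x - y) ⬝ᵥ (A *ᵥ (x - y))
        - Complex.I * star (x + Complex.I • y) ⬝ᵥ (A *ᵥ (x + Complex.I • y))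
        + Complex.I * star (x - Complex.I • y) ⬝ᵥ (A *ᵥ (x - Complex.I • y))) / 4 := by
  simp only [star_add, star_sub, star_smul, mulVec_add, mulVec_sub, mulVec_smul, dotProduct_add,
    dotProduct_sub, add_dotProduct, sub_dotProduct, dotProduct_smul, smul_dotProduct,
    smul_eq_mul, Complex.star_def, Complex.conj_I]
  linear_combination (star x ⬝ᵥ (A *ᵥ y) - star y ⬝ᵥ (A *ᵥ x)) / 2 * Complex.I_sq

theorem exists_tendsto_of_forall_tendsto_dotProduct_mulVec [DecidableEq ι] {α : Type*}
    {l : Filter α} {M : α → Matrix ι ι ℂ}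
    (h : ∀ v, ∃ c, Tendsto (fun a => star v ⬝ᵥ (M a *ᵥ v)) l (𝓝 c)) :
    ∃ L, Tendsto M l (𝓝 L) := by
  choose c hc using h
  set e : ι → ι → ℂ := fun i => Pi.single i 1
  have hentry (N : Matrix ι ι ℂ) (i j : ι) : N i j = star (e i) ⬝ᵥ (N *ᵥ e j) := by
    simp [e, Pi.star_single]
  refine ⟨fun i j => (c (e i + e j) - c (e i - e j) - Complex.I * c (e i + Complex.I • e j)
      + Complex.I * c (e i - Complex.I • e j)) / 4,
    tendsto_pi_nhds.2 fun i => tendsto_pi_nhds.2 fun j => ?_⟩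
  refine Tendsto.congr (fun a => ((hentry (M a) i j).trans
    (dotProduct_mulVec_polarization (M a) (e i) (e j))).symm) ?_
  exact ((((hc _).sub (hc _)).sub ((hc _).const_mul _)).add ((hc _).const_mul _)).div_const 4

theorem dotProduct_mulVec_mono {A B : Matrix ι ι ℂ} (h : A ≤ B) (v : ι → ℂ) :
    star v ⬝ᵥ (A *ᵥ v) ≤ star v ⬝ᵥ (B *ᵥ v) := by
  simpa [sub_mulVec, dotProduct_sub, sub_nonneg] using (le_iff.1 h).dotProduct_mulVec_nonneg v

theorem exists_tendsto_of_monotone_of_bddAbove [DecidableEq ι] {α : Type*} [Preorder α]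
    {M : α → Matrix ι ι ℂ} (hM : Monotone M) (hb : BddAbove (Set.range M)) :
    ∃ L, Tendsto M atTop (𝓝 L) := by
  obtain ⟨B, hB⟩ := hb
  refine exists_tendsto_of_forall_tendsto_dotProduct_mulVec fun v =>
    Complex.exists_tendsto_of_monotone_of_bddAbove (fun a a' h => dotProduct_mulVec_mono (hM h) v)
      ⟨star v ⬝ᵥ (B *ᵥ v), ?_⟩
  rintro _ ⟨a, rfl⟩
  exact dotProduct_mulVec_mono (hB ⟨a, rfl⟩) v

theorem isClosed_setOf_posSemidef : IsClosed {A : Matrix ι ι ℂ | A.PosSemidef} := by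
  simp only [posSemidef_iff_dotProduct_mulVec, Set.ofPred_and, Set.ofPred_forall]
  exact (isClosed_eq continuous_id.matrix_conjTranspose continuous_id).inter
    (isClosed_iInter fun v => isClosed_le continuous_const
      (continuous_const.dotProduct (continuous_id.matrix_mulVec continuous_const)))

instance : OrderClosedTopology (Matrix ι ι ℂ) :=
  ⟨isClosed_setOf_posSemidef.preimage (continuous_snd.sub continuous_fst)⟩

theorem conjTranspose_mul_mul_mono {κ : Type*} [Fintype κ] {X Y : Matrix ι ι ℂ} (h : X ≤ Y)
    (A : Matrix ι κ ℂ) : Aᴴ * X * A ≤ Aᴴ * Y * A := by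
  rw [le_iff, ← Matrix.sub_mul, ← Matrix.mul_sub]
  exact (le_iff.1 h).conjTranspose_mul_mul_same A

section
open scoped Norms.L2Operator

theorem PosDef.inv_anti [DecidableEq ι] {A B : Matrix ι ι ℂ} (hA : A.PosDef) (hAB : A ≤ B) :
    B⁻¹ ≤ A⁻¹ := by
  simpa [coe_units_inv] using
    CStarAlgebra.inv_le_inv (a := hA.isUnit.unit) (b := (hA.of_le hAB).isUnit.unit)
      (nonneg_iff_posSemidef.2 hA.posSemidef) hAB

end

theorem PosDef.continuousAt_inv [DecidableEq ι] {A : Matrix ι ι ℂ} (hA : A.PosDef) :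
    ContinuousAt Inv.inv A :=
  continuousAt_matrix_inv A (by simpa [Ring.inverse_eq_inv'] using continuousAt_inv₀ hA.det_pos.ne')

theorem PosDef.inv_inv_add_mul_inv_mul_conjTranspose [DecidableEq ι] {κ : Type*} [Fintype κ]
    [DecidableEq κ] {P : Matrix ι ι ℂ} {R : Matrix κ κ ℂ} (hP : P.PosDef) (hR : R.PosDef)
    (B : Matrix ι κ ℂ) :
    (P⁻¹ + B * R⁻¹ * Bᴴ)⁻¹ = P - P * B * (R + Bᴴ * P * B)⁻¹ * Bᴴ * P := by
  have hP' : P⁻¹⁻¹ = P := nonsing_inv_nonsing_inv P ((isUnit_iff_isUnit_det P).1 hP.isUnit)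
  have hR' : R⁻¹⁻¹ = R := nonsing_inv_nonsing_inv R ((isUnit_iff_isUnit_det R).1 hR.isUnit)
  have hT : (R + Bᴴ * P * B).PosDef :=
    hR.add_posSemidef (hP.posSemidef.conjTranspose_mul_mul_same B)
  rw [add_mul_mul_inv_eq_sub _ _ _ _ hP.inv.isUnit hR.inv.isUnit
    (by rw [hP', hR']; exact hT.isUnit), hP', hR']

end Loewner

end Matrix

section AntiRiccatiMap

variable {ι κ : Type*} [Fintype ι] [DecidableEq ι] [Fintype κ] [DecidableEq κ]

def antiRiccatiMap (A : Matrix ι ι ℂ) (B : Matrix ι κ ℂ) (Q : Matrix ι ι ℂ)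
    (R : Matrix κ κ ℂ) (X : Matrix ι ι ℂ) : Matrix ι ι ℂ :=
  Q + Aᴴ * ((mconj X)⁻¹ + B * R⁻¹ * Bᴴ)⁻¹ * A

variable {A : Matrix ι ι ℂ} {B : Matrix ι κ ℂ} {Q : Matrix ι ι ℂ} {R : Matrix κ κ ℂ}
  {X Y : Matrix ι ι ℂ}

theorem posDef_mconj_inv_add (hX : X.PosDef) (hR : R.PosSemidef) :
    ((mconj X)⁻¹ + B * R⁻¹ * Bᴴ).PosDef :=
  hX.mconj.inv.add_posSemidef (hR.inv.mul_mul_conjTranspose_same B)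

theorem le_antiRiccatiMap (hX : X.PosDef) (hR : R.PosSemidef) :
    Q ≤ antiRiccatiMap A B Q R X := by
  rw [le_iff, antiRiccatiMap, add_sub_cancel_left]
  exact (posDef_mconj_inv_add hX hR).inv.posSemidef.conjTranspose_mul_mul_same A

theorem antiRiccatiMap_mono (hX : X.PosDef) (hR : R.PosSemidef) (hXY : X ≤ Y) :
    antiRiccatiMap A B Q R X ≤ antiRiccatiMap A B Q R Y := by
  have hconj : (mconj Y)⁻¹ ≤ (mconj X)⁻¹ := hX.mconj.inv_anti (mconj_mono hXY)
  have hinv : ((mconj X)⁻¹ + B * R⁻¹ * Bᴴ)⁻¹ ≤ ((mconj Y)⁻¹ + B * R⁻¹ * Bᴴ)⁻¹ :=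
    (posDef_mconj_inv_add (hX.of_le hXY) hR).inv_anti (add_le_add hconj le_rfl)
  exact add_le_add le_rfl (conjTranspose_mul_mul_mono hinv A)

theorem continuousAt_antiRiccatiMap (hX : X.PosDef) (hR : R.PosSemidef) :
    ContinuousAt (antiRiccatiMap A B Q R) X := by
  have hW : ContinuousAt (fun Z => (mconj Z)⁻¹ + B * R⁻¹ * Bᴴ) X :=
    (hX.mconj.continuousAt_inv.comp continuous_mconj.continuousAt).add continuousAt_const
  have hWinv : ContinuousAt (fun Z => ((mconj Z)⁻¹ + B * R⁻¹ * Bᴴ)⁻¹) X :=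
    ContinuousAt.comp (g := Inv.inv) (posDef_mconj_inv_add hX hR).continuousAt_inv hW
  exact continuousAt_const.add ((continuousAt_const.mul hWinv).mul continuousAt_const)

end AntiRiccatiMap

section AntiIter

variable {A₂ : Matrix (Fin n) (Fin n) ℂ} {B₂ : Matrix (Fin n) (Fin m) ℂ}
  {Q : Matrix (Fin n) (Fin n) ℂ} {R : Matrix (Fin m) (Fin m) ℂ} {X : Matrix (Fin n) (Fin n) ℂ}

theorem antiRiccati_iff_isFixedPt (hX : X.PosDef) (hR : R.PosDef) :
    AntiRiccati A₂ B₂ Q R X ↔ IsFixedPt (antiRiccatiMap A₂ B₂ Q R) X := by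
  rw [AntiRiccati, IsFixedPt, antiRiccatiMap,
    hX.mconj.inv_inv_add_mul_inv_mul_conjTranspose hR B₂, neg_eq_iff_eq_neg, neg_sub,
    eq_sub_iff_add_eq]
  simp only [Matrix.mul_sub, Matrix.sub_mul, Matrix.mul_assoc]

theorem antiIter_eq_iterate :
    antiIter A₂ B₂ Q R = fun k => (antiRiccatiMap A₂ B₂ Q R)^[k] Q := by
  funext k
  induction k with
  | zero => rfl
  | succ k ih => rw [iterate_succ_apply', ← ih]; rfl

theorem antiIter_posDef (hQ : Q.PosDef) (hR : R.PosSemidef) (k : ℕ) :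
    (antiIter A₂ B₂ Q R k).PosDef := by
  induction k with
  | zero => exact hQ
  | succ k ih => exact hQ.of_le (le_antiRiccatiMap ih hR)

theorem monotone_antiIter (hQ : Q.PosDef) (hR : R.PosSemidef) :
    Monotone (antiIter A₂ B₂ Q R) := by
  refine monotone_nat_of_le_succ fun k => ?_
  induction k with
  | zero => exact le_antiRiccatiMap hQ hR
  | succ k ih => exact antiRiccatiMap_mono (antiIter_posDef hQ hR k) hR ih

theorem antiIter_le_of_isFixedPt (hQ : Q.PosDef) (hR : R.PosSemidef)
    (hX : X.PosDef) (hfix : IsFixedPt (antiRiccatiMap A₂ B₂ Q R) X) (k : ℕ) :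
    antiIter A₂ B₂ Q R k ≤ X := by
  induction k with
  | zero => exact hfix ▸ le_antiRiccatiMap hX hR
  | succ k ih => exact hfix ▸ antiRiccatiMap_mono (antiIter_posDef hQ hR k) hR ih

end AntiIter

theorem antiIter_tendsto_general
    (A₂ : Matrix (Fin n) (Fin n) ℂ) (B₂ : Matrix (Fin n) (Fin m) ℂ)
    (Q : Matrix (Fin n) (Fin n) ℂ) (R : Matrix (Fin m) (Fin m) ℂ)
    (hQ : Q.PosDef) (hR : R.PosDef)
    (P : Matrix (Fin n) (Fin n) ℂ) (hP : P.PosDef ∧ AntiRiccati A₂ B₂ Q R P)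
    (huniq : ∀ P' : Matrix (Fin n) (Fin n) ℂ,
      P'.PosDef ∧ AntiRiccati A₂ B₂ Q R P' → P' = P) :
    (∀ k : ℕ, (antiIter A₂ B₂ Q R k).PosDef) ∧
    Tendsto (fun k => antiIter A₂ B₂ Q R k) atTop (𝓝 P) := by
  obtain ⟨hPpos, hPric⟩ := hP
  have hPfix := (antiRiccati_iff_isFixedPt hPpos hR).1 hPric
  have hmono := monotone_antiIter (A₂ := A₂) (B₂ := B₂) hQ hR.posSemidef
  obtain ⟨L, hL⟩ := exists_tendsto_of_monotone_of_bddAbove hmono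
    ⟨P, Set.forall_mem_range.2 (antiIter_le_of_isFixedPt hQ hR.posSemidef hPpos hPfix)⟩
  have hLpos : L.PosDef := hQ.of_le (hmono.ge_of_tendsto hL 0)
  have hLfix : IsFixedPt (antiRiccatiMap A₂ B₂ Q R) L := isFixedPt_of_tendsto_iterate
    (antiIter_eq_iterate ▸ hL) (continuousAt_antiRiccatiMap hLpos hR.posSemidef)
  obtain rfl := huniq L ⟨hLpos, (antiRiccati_iff_isFixedPt hLpos hR).2 hLfix⟩
  exact ⟨antiIter_posDef hQ hR.posSemidef, hL⟩

/-- If the antilinear system is stabilizable and `P` is the unique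
Hermitian positive definite solution of the anti-Riccati equation, then the anti-Riccati
iteration is well defined (each iterate is Hermitian positive definite) and converges to
`P` entrywise. -/
theorem antiIter_tendsto
    (A₂ : Matrix (Fin n) (Fin n) ℂ) (B₂ : Matrix (Fin n) (Fin m) ℂ)
    (Q : Matrix (Fin n) (Fin n) ℂ) (R : Matrix (Fin m) (Fin m) ℂ)
    (hQ : Q.PosDef) (hR : R.PosDef)
    (hstab : AntiStabilizable A₂ B₂)
    (P : Matrix (Fin n) (Fin n) ℂ) (hP : P.PosDef ∧ AntiRiccati A₂ B₂ Q R P)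
    (huniq : ∀ P' : Matrix (Fin n) (Fin n) ℂ,
      P'.PosDef ∧ AntiRiccati A₂ B₂ Q R P' → P' = P) :
    (∀ k : ℕ, (antiIter A₂ B₂ Q R k).PosDef) ∧
    Tendsto (fun k => antiIter A₂ B₂ Q R k) atTop (𝓝 P) :=
  antiIter_tendsto_general A₂ B₂ Q R hQ hR P hP huniq
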